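/- arXiv:1402.0499 — 7 statements merged into one kernel-verified Lean document; each statement's English description precedes it below -/
import Mathlib

section
/- Let Q be a loop (a type with a binary operation ·, identity 1, and two-sided division making it a quasigroup). Drisko's lemma: for elements f, g, c, d of Q, the principal isotopes Q_{f,g} and Q_{c,d} (with operation x ∘ y = (x/g)·(f\y)) are isomorphic via some bijection θ if and only if there exists an autotopism (α, β, γ) of Q such that fα = c, gβ = d, and (f·g)γ = c·d. -/
/-- A loop: a quasigroup with a two-sided identity. `ldiv a b` is `a \ b`, `rdiv a b` is `a / b`. -/
structure LoopStr (Q : Type*) where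
  mul : Q → Q → Q
  one : Q
  ldiv : Q → Q → Q
  rdiv : Q → Q → Q
  one_mul : ∀ x, mul one x = x
  mul_one : ∀ x, mul x one = x
  mul_ldiv : ∀ a b, mul a (ldiv a b) = b
  ldiv_mul : ∀ a b, ldiv a (mul a b) = b
  rdiv_mul : ∀ a b, mul (rdiv a b) b = a
  mul_rdiv : ∀ a b, rdiv (mul a b) b = a

/-- Operation of the principal isotope `Q_{f,g}` : `x ∘ y = (x / g) · (f \ y)`. -/
def pop {Q : Type*} (L : LoopStr Q) (f g : Q) (x y : Q) : Q :=
  L.mul (L.rdiv x g) (L.ldiv f y)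

/-!
An isomorphism `θ : Q_{f,g} → Q_{c,d}` sends the identity `f·g` to `c·d`. Conjugating `θ` by the
right translations `R_g`, `R_d` and by the left translations `L_f`, `L_c` gives the first two
components of an autotopism `(R_g θ R_d⁻¹, L_f θ L_c⁻¹, θ)`, because `(x·g) ∘ (f·y) = x·y`.
Conversely, the third component `γ` of an autotopism with `fα = c`, `gβ = d` satisfies
`(x/g)α = xγ/d` and `(f\y)β = c\yγ`, which is exactly what makes `γ` an isomorphism of the isotopes.
-/

namespace LoopStr

variable {Q : Type*} (L : LoopStr Q)

theorem rdiv_eq_of_mul_eq {a b c : Q} (h : L.mul a b = c) : L.rdiv c b = a := by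
  rw [← h, L.mul_rdiv]

theorem ldiv_eq_of_mul_eq {a b c : Q} (h : L.mul a b = c) : L.ldiv a c = b := by
  rw [← h, L.ldiv_mul]

def mulRight (g : Q) : Q ≃ Q where
  toFun x := L.mul x g
  invFun x := L.rdiv x g
  left_inv x := L.mul_rdiv x g
  right_inv x := L.rdiv_mul x g

def mulLeft (f : Q) : Q ≃ Q where
  toFun x := L.mul f x
  invFun x := L.ldiv f x
  left_inv x := L.ldiv_mul f x
  right_inv x := L.mul_ldiv f x

def IsAutotopism (α β γ : Q ≃ Q) : Prop :=
  ∀ x y, L.mul (α x) (β y) = γ (L.mul x y)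

theorem pop_mul_mul (f g x y : Q) : pop L f g (L.mul x g) (L.mul f y) = L.mul x y := by
  rw [pop, L.mul_rdiv, L.ldiv_mul]

theorem pop_mul_left (f g y : Q) : pop L f g (L.mul f g) y = y := by
  rw [pop, L.mul_rdiv, L.mul_ldiv]

theorem pop_mul_right (f g x : Q) : pop L f g x (L.mul f g) = x := by
  rw [pop, L.ldiv_mul, L.rdiv_mul]

section IsotopeIso

variable {L} {f g c d : Q} {θ : Q ≃ Q}
  (hθ : ∀ x y, θ (pop L f g x y) = pop L c d (θ x) (θ y))
include hθ

theorem isotopeIso_map_mul : θ (L.mul f g) = L.mul c d :=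
  calc θ (L.mul f g)
      = pop L c d (θ (L.mul f g)) (θ (θ.symm (L.mul c d))) := by
        rw [θ.apply_symm_apply, pop_mul_right]
    _ = L.mul c d := by rw [← hθ, pop_mul_left, θ.apply_symm_apply]

theorem isAutotopism_of_isotopeIso :
    L.IsAutotopism ((L.mulRight g).trans (θ.trans (L.mulRight d).symm))
      ((L.mulLeft f).trans (θ.trans (L.mulLeft c).symm)) θ := by
  intro x y
  rw [← pop_mul_mul L f g x y, hθ]
  rfl

end IsotopeIso

namespace IsAutotopism

variable {L} {f g c d : Q} {α β γ : Q ≃ Q} (h : L.IsAutotopism α β γ)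
include h

theorem map_rdiv (hg : β g = d) (x : Q) : α (L.rdiv x g) = L.rdiv (γ x) d :=
  (L.rdiv_eq_of_mul_eq (by rw [← hg, h, L.rdiv_mul])).symm

theorem map_ldiv (hf : α f = c) (y : Q) : β (L.ldiv f y) = L.ldiv c (γ y) :=
  (L.ldiv_eq_of_mul_eq (by rw [← hf, h, L.mul_ldiv])).symm

theorem isotopeIso (hf : α f = c) (hg : β g = d) (x y : Q) :
    γ (pop L f g x y) = pop L c d (γ x) (γ y) := by
  rw [pop, ← h, h.map_rdiv hg, h.map_ldiv hf, pop]

end IsAutotopism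

end LoopStr

/-- Drisko's lemma: `Q_{f,g} ≅ Q_{c,d}` iff there is an autotopism `(α,β,γ)` of `Q`
with `fα = c`, `gβ = d` and `(f·g)γ = c·d`. -/
theorem drisko {Q : Type*} (L : LoopStr Q) (f g c d : Q) :
    (∃ θ : Q ≃ Q, ∀ x y, θ (pop L f g x y) = pop L c d (θ x) (θ y)) ↔
    (∃ α β γ : Q ≃ Q, (∀ x y, L.mul (α x) (β y) = γ (L.mul x y)) ∧
      α f = c ∧ β g = d ∧ γ (L.mul f g) = L.mul c d) := by
  constructor
  · rintro ⟨θ, hθ⟩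
    have hfg := LoopStr.isotopeIso_map_mul hθ
    refine ⟨_, _, θ, LoopStr.isAutotopism_of_isotopeIso hθ, ?_, ?_, hfg⟩
    · exact L.rdiv_eq_of_mul_eq hfg.symm
    · exact L.ldiv_eq_of_mul_eq hfg.symm
  · rintro ⟨α, β, γ, hauto, hf, hg, -⟩
    exact ⟨γ, LoopStr.IsAutotopism.isotopeIso hauto hf hg⟩
end

section
/- Let Q be a loop and let θ be an isomorphism from the principal isotope Q_{f,g} to Q_{c,d}. Then the triple (R_g θ R_d^{-1}, L_f θ L_c^{-1}, θ) is an autotopism of Q, where R_a is right translation x ↦ x·a and L_a is left translation x ↦ a·x. -/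
theorem pop_mul_right_mul_left {Q : Type*} (L : LoopStr Q) (f g x y : Q) :
    pop L f g (L.mul x g) (L.mul f y) = L.mul x y := by
  rw [pop, L.mul_rdiv, L.ldiv_mul]

/-- If `θ : Q_{f,g} → Q_{c,d}` is an isomorphism, then
`(R_g θ R_d⁻¹, L_f θ L_c⁻¹, θ)` is an autotopism of `Q`. -/
theorem autotopism_of_isotope_iso {Q : Type*} (L : LoopStr Q) (f g c d : Q) (θ : Q ≃ Q)
    (hθ : ∀ x y, θ (pop L f g x y) = pop L c d (θ x) (θ y)) :
    ∀ x y : Q,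
      L.mul (L.rdiv (θ (L.mul x g)) d) (L.ldiv c (θ (L.mul f y))) = θ (L.mul x y) := by
  intro x y
  calc pop L c d (θ (L.mul x g)) (θ (L.mul f y))
      = θ (pop L f g (L.mul x g) (L.mul f y)) := (hθ _ _).symm
    _ = θ (L.mul x y) := by rw [pop_mul_right_mul_left]
end

section
/- Let Q be a quasigroup and let a,b,c,d ∈ Q. The identity map is an isomorphism from the principal isotope Q_{a,b} to Q_{c,d} if and only if c·b and a·d lie in the middle nucleus of Q_{a,b} and a·b = c·d. -/
/-- A quasigroup with two-sided divisions. -/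
structure QuasiStr (Q : Type*) where
  mul : Q → Q → Q
  ldiv : Q → Q → Q
  rdiv : Q → Q → Q
  mul_ldiv : ∀ a b, mul a (ldiv a b) = b
  ldiv_mul : ∀ a b, ldiv a (mul a b) = b
  rdiv_mul : ∀ a b, mul (rdiv a b) b = a
  mul_rdiv : ∀ a b, rdiv (mul a b) b = a

/-- Operation of the principal isotope `Q_{a,b}` : `x ∘ y = (x / b) · (a \ y)`. -/
def qpop {Q : Type*} (L : QuasiStr Q) (a b : Q) (x y : Q) : Q :=
  L.mul (L.rdiv x b) (L.ldiv a y)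

/-- Membership in the middle nucleus of the magma `(Q, ∘)`. -/
def MemMidNucleus {Q : Type*} (op : Q → Q → Q) (n : Q) : Prop :=
  ∀ x y, op (op x n) y = op x (op n y)

/-!
`Q_{a,b}` is a loop with identity `a·b`, and `Q_{c,d}` is the isotope of it given by
`x ∘_{c,d} y = (x / (a·d)) ∘ ((c·b) \ y)`, the divisions being those of `Q_{a,b}`.
So the theorem is the loop fact that `x ∘ y = (x / g) ∘ (f \ y)` holds identically iff
`f, g ∈ N_μ` and `f ∘ g` is the identity, applied to `f = c·b`, `g = a·d`, for which
`f ∘ g = c·d`.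
-/

namespace QuasiStr

variable {Q : Type*} (L : QuasiStr Q)

theorem mul_right_cancel {x y z : Q} (h : L.mul x z = L.mul y z) : x = y := by
  simpa only [L.mul_rdiv] using congrArg (L.rdiv · z) h

section Loop

variable {L} {e : Q} (he_left : ∀ x, L.mul e x = x) (he_right : ∀ x, L.mul x e = x)
include he_left he_right

theorem mul_eq_of_memMidNucleus_of_mul_eq {f g : Q} (hf : MemMidNucleus L.mul f)
    (hfg : L.mul f g = e) : L.mul g f = e :=
  L.mul_right_cancel (z := g) <| by rw [hf, hfg, he_left, he_right]

theorem forall_mul_eq_rdiv_mul_ldiv_iff {f g : Q} :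
    (∀ x y, L.mul x y = L.mul (L.rdiv x g) (L.ldiv f y)) ↔
      MemMidNucleus L.mul f ∧ MemMidNucleus L.mul g ∧ L.mul f g = e := by
  constructor
  · intro h
    have hgf_mul : ∀ u v, L.mul (L.mul u g) (L.mul f v) = L.mul u v := fun u v => by
      rw [h, L.mul_rdiv, L.ldiv_mul]
    have hg_mul : ∀ v, L.mul g (L.mul f v) = v := fun v => by
      simpa only [he_left] using hgf_mul e v
    have hmul_f : ∀ u, L.mul (L.mul u g) f = u := fun u => by
      simpa only [he_right] using hgf_mul u e
    have hg : MemMidNucleus L.mul g := by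
      intro x y
      obtain ⟨v, rfl⟩ : ∃ v, y = L.mul f v := ⟨L.ldiv f y, (L.mul_ldiv f y).symm⟩
      rw [hgf_mul, hg_mul]
    have hf : MemMidNucleus L.mul f := by
      intro x y
      obtain ⟨u, rfl⟩ : ∃ u, x = L.mul u g := ⟨L.rdiv x g, (L.rdiv_mul x g).symm⟩
      rw [hmul_f, hgf_mul]
    have hgf : L.mul g f = e := by simpa only [he_right] using hg_mul e
    exact ⟨hf, hg, mul_eq_of_memMidNucleus_of_mul_eq he_left he_right hg hgf⟩
  · rintro ⟨hf, hg, hfg⟩ x y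
    have hgf := mul_eq_of_memMidNucleus_of_mul_eq he_left he_right hf hfg
    set u := L.rdiv x g
    set v := L.ldiv f y
    calc L.mul x y = L.mul (L.mul u g) (L.mul f v) := by rw [L.rdiv_mul, L.mul_ldiv]
      _ = L.mul u (L.mul (L.mul g f) v) := by rw [hg, hf]
      _ = L.mul u v := by rw [hgf, he_left]

end Loop

def isotope (a b : Q) : QuasiStr Q where
  mul := qpop L a b
  ldiv x z := L.mul a (L.ldiv (L.rdiv x b) z)
  rdiv z y := L.mul (L.rdiv z (L.ldiv a y)) b
  mul_ldiv _ _ := by simp only [qpop, L.ldiv_mul, L.mul_ldiv]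
  ldiv_mul _ _ := by simp only [qpop, L.ldiv_mul, L.mul_ldiv]
  rdiv_mul _ _ := by simp only [qpop, L.mul_rdiv, L.rdiv_mul]
  mul_rdiv _ _ := by simp only [qpop, L.mul_rdiv, L.rdiv_mul]

theorem isotope_mul (a b : Q) : (L.isotope a b).mul = qpop L a b := rfl

theorem isotope_one_mul (a b x : Q) : (L.isotope a b).mul (L.mul a b) x = x := by
  simp only [isotope, qpop, L.mul_rdiv, L.mul_ldiv]

theorem isotope_mul_one (a b x : Q) : (L.isotope a b).mul x (L.mul a b) = x := by
  simp only [isotope, qpop, L.ldiv_mul, L.rdiv_mul]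

theorem qpop_mul_mul (a b u v : Q) : qpop L a b (L.mul u b) (L.mul a v) = L.mul u v := by
  simp only [qpop, L.mul_rdiv, L.ldiv_mul]

theorem qpop_eq_isotope_rdiv_mul_ldiv (a b c d x y : Q) :
    qpop L c d x y =
      qpop L a b ((L.isotope a b).rdiv x (L.mul a d)) ((L.isotope a b).ldiv (L.mul c b) y) := by
  simp only [isotope, qpop, L.ldiv_mul, L.mul_rdiv]

end QuasiStr

/-- Bryant–Schneider: the identity map is an isomorphism `Q_{a,b} → Q_{c,d}` iff
`c·b, a·d ∈ N_μ(Q_{a,b})` and `a·b = c·d`. -/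
theorem bryant_schneider {Q : Type*} (L : QuasiStr Q) (a b c d : Q) :
    (∀ x y, qpop L a b x y = qpop L c d x y) ↔
    (MemMidNucleus (qpop L a b) (L.mul c b) ∧ MemMidNucleus (qpop L a b) (L.mul a d) ∧
      L.mul a b = L.mul c d) := by
  simp_rw [L.qpop_eq_isotope_rdiv_mul_ldiv a b c d]
  refine ((L.isotope a b).forall_mul_eq_rdiv_mul_ldiv_iff (L.isotope_one_mul a b)
    (L.isotope_mul_one a b)).trans ?_
  rw [L.isotope_mul, L.qpop_mul_mul, eq_comm]
end

section
/- Every Osborn loop of exponent 2 is an abelian group (a Boolean group). -/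
/-! With exponent 2 every element is its own left inverse, so the Osborn identity reads
`(x(yz))x = (xy)((x(xz))x)`. Putting `z = y` gives `(x(xy))x = xy`; putting `y = 1` then gives
`(xz)x = x(xz)`, which is commutativity since `xz` ranges over the whole loop. Commutativity
turns the first identity into the left inverse property `x(xy) = y`, and the Osborn identity
collapses to `yz = (xy)(xz)`; substituting `xz` for `z` yields `(xy)z = y(xz)`, i.e.
associativity up to commutativity. -/

namespace LoopStr

variable {Q : Type*} (L : LoopStr Q)

local infixl:70 " ⋆ " => L.mul

def IsOsborn : Prop :=
  ∀ x y z, (x ⋆ (y ⋆ z)) ⋆ x = (x ⋆ y) ⋆ ((L.rdiv L.one x ⋆ (x ⋆ z)) ⋆ x)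

variable {L}

theorem mul_left_cancel {x a b : Q} (h : x ⋆ a = x ⋆ b) : a = b := by
  simpa only [L.ldiv_mul] using congrArg (L.ldiv x) h

theorem rdiv_one_eq_self_of_mul_self {x : Q} (hx : x ⋆ x = L.one) : L.rdiv L.one x = x := by
  simpa only [hx] using L.mul_rdiv x x

namespace IsOsborn

theorem of_exp_two (hosb : L.IsOsborn) (hexp : ∀ x, x ⋆ x = L.one) (x y z : Q) :
    (x ⋆ (y ⋆ z)) ⋆ x = (x ⋆ y) ⋆ ((x ⋆ (x ⋆ z)) ⋆ x) := by
  have h := hosb x y z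
  rwa [rdiv_one_eq_self_of_mul_self (hexp x)] at h

theorem mul_mul_mul_right_self (hosb : L.IsOsborn) (hexp : ∀ x, x ⋆ x = L.one) (x y : Q) :
    (x ⋆ (x ⋆ y)) ⋆ x = x ⋆ y := by
  have h := hosb.of_exp_two hexp x y y
  rw [hexp y, L.mul_one, hexp x] at h
  exact (mul_left_cancel ((hexp (x ⋆ y)).trans h)).symm

theorem mul_right_self (hosb : L.IsOsborn) (hexp : ∀ x, x ⋆ x = L.one) (x y : Q) :
    (x ⋆ y) ⋆ x = x ⋆ (x ⋆ y) := by
  have h := hosb.of_exp_two hexp x L.one y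
  rwa [L.one_mul, L.mul_one, hosb.mul_mul_mul_right_self hexp] at h

theorem mul_comm (hosb : L.IsOsborn) (hexp : ∀ x, x ⋆ x = L.one) (x y : Q) :
    x ⋆ y = y ⋆ x := by
  simpa only [L.mul_ldiv] using hosb.mul_right_self hexp y (L.ldiv y x)

theorem mul_mul_cancel_left (hosb : L.IsOsborn) (hexp : ∀ x, x ⋆ x = L.one) (x y : Q) :
    x ⋆ (x ⋆ y) = y :=
  mul_left_cancel ((hosb.mul_comm hexp _ _).trans (hosb.mul_mul_mul_right_self hexp x y))

theorem mul_mul_mul_left (hosb : L.IsOsborn) (hexp : ∀ x, x ⋆ x = L.one) (x y z : Q) :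
    (x ⋆ y) ⋆ (x ⋆ z) = y ⋆ z := by
  have h := hosb.of_exp_two hexp x y z
  rw [hosb.mul_comm hexp _ x, hosb.mul_mul_cancel_left hexp, hosb.mul_right_self hexp,
    hosb.mul_mul_cancel_left hexp] at h
  exact h.symm

theorem mul_assoc (hosb : L.IsOsborn) (hexp : ∀ x, x ⋆ x = L.one) (x y z : Q) :
    (x ⋆ y) ⋆ z = x ⋆ (y ⋆ z) :=
  calc (x ⋆ y) ⋆ z = (y ⋆ x) ⋆ (y ⋆ (y ⋆ z)) := by
        rw [hosb.mul_comm hexp x y, hosb.mul_mul_cancel_left hexp]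
    _ = x ⋆ (y ⋆ z) := hosb.mul_mul_mul_left hexp y x (y ⋆ z)

end IsOsborn

end LoopStr

/-- Every Osborn loop of exponent 2 is an abelian group (a Boolean group).
Here `x^λ = 1 / x` is the left inverse of `x`. -/
theorem osborn_exp_two_abelian_group {Q : Type*} (L : LoopStr Q)
    (osborn : ∀ x y z, L.mul (L.mul x (L.mul y z)) x =
      L.mul (L.mul x y) (L.mul (L.mul (L.rdiv L.one x) (L.mul x z)) x))
    (exp2 : ∀ x, L.mul x x = L.one) :
    (∀ x y, L.mul x y = L.mul y x) ∧
    (∀ x y z, L.mul (L.mul x y) z = L.mul x (L.mul y z)) := by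
  have hosb : L.IsOsborn := osborn
  exact ⟨hosb.mul_comm exp2, hosb.mul_assoc exp2⟩
end

section
/- In any loop Q, the set BS₂(Q) of bijections θ of Q such that θ is an isomorphism from some principal isotope Q_{a,b} to some principal isotope Q_{c,d} forms a group under composition (the second Bryant–Schneider group). -/
/-!
Every principal isotope of `Q` is a principal isotope of any other one:
`Q_{c,d} = (Q_{e,f})_{cf, ed}`, and in general `(Q_{e,f})_{u,v} = Q_{u/f, e\v}`.
An isomorphism `θ : Q_{e,f} → Q_{g,h}` of loops preserves the divisions, hence carries the
principal isotope `(Q_{e,f})_{u,v}` onto `(Q_{g,h})_{θu,θv}`. So, after re-basing, an isomorphism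
`Q_{e,f} → Q_{g,h}` can be precomposed with any isomorphism `Q_{a,b} → Q_{c,d}`, and the class of
such bijections is closed under composition; it is clearly closed under inverses.
-/

namespace LoopStr

variable {Q R S : Type*}

theorem ext_of_mul {L M : LoopStr Q} (h : L.mul = M.mul) : L = M := by
  have hone : L.one = M.one := by
    rw [← M.one_mul L.one, ← h, L.mul_one]
  have hldiv : L.ldiv = M.ldiv := by
    funext a b
    rw [← M.ldiv_mul a (L.ldiv a b), ← h, L.mul_ldiv]
  have hrdiv : L.rdiv = M.rdiv := by
    funext a b
    rw [← M.mul_rdiv (L.rdiv a b) b, ← h, L.rdiv_mul]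
  cases L
  cases M
  simp_all

/-- The principal isotope `Q_{e,f}`. -/
def isotope (L : LoopStr Q) (e f : Q) : LoopStr Q where
  mul := pop L e f
  one := L.mul e f
  ldiv x y := L.mul e (L.ldiv (L.rdiv x f) y)
  rdiv x y := L.mul (L.rdiv x (L.ldiv e y)) f
  one_mul x := by simp [pop, L.mul_rdiv, L.mul_ldiv]
  mul_one x := by simp [pop, L.ldiv_mul, L.rdiv_mul]
  mul_ldiv a b := by simp [pop, L.ldiv_mul, L.mul_ldiv]
  ldiv_mul a b := by simp [pop, L.ldiv_mul, L.mul_ldiv]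
  rdiv_mul a b := by simp [pop, L.mul_rdiv, L.rdiv_mul]
  mul_rdiv a b := by simp [pop, L.mul_rdiv, L.rdiv_mul]

theorem isotope_isotope (L : LoopStr Q) (e f u v : Q) :
    (L.isotope e f).isotope u v = L.isotope (L.rdiv u f) (L.ldiv e v) :=
  ext_of_mul <| by
    funext x y
    simp [isotope, pop, L.mul_rdiv, L.ldiv_mul]

theorem isotope_eq_isotope_isotope (L : LoopStr Q) (c d e f : Q) :
    L.isotope c d = (L.isotope e f).isotope (L.mul c f) (L.mul e d) := by
  rw [isotope_isotope, L.mul_rdiv, L.ldiv_mul]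

def IsHom (L : LoopStr Q) (M : LoopStr R) (θ : Q → R) : Prop :=
  ∀ x y, θ (L.mul x y) = M.mul (θ x) (θ y)

namespace IsHom

variable {L : LoopStr Q} {M : LoopStr R} {N : LoopStr S} {θ : Q → R}

theorem id (L : LoopStr Q) : IsHom L L id := fun _ _ => rfl

theorem comp {φ : R → S} (hφ : IsHom M N φ) (hθ : IsHom L M θ) : IsHom L N (φ ∘ θ) :=
  fun x y => by simp only [Function.comp_apply, hθ x y, hφ (θ x) (θ y)]

theorem symm {θ : Q ≃ R} (hθ : IsHom L M θ) : IsHom M L θ.symm := fun x y =>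
  θ.injective <| by rw [hθ, Equiv.apply_symm_apply, Equiv.apply_symm_apply, Equiv.apply_symm_apply]

theorem map_rdiv (hθ : IsHom L M θ) (x y : Q) : θ (L.rdiv x y) = M.rdiv (θ x) (θ y) := by
  rw [← M.mul_rdiv (θ (L.rdiv x y)) (θ y), ← hθ, L.rdiv_mul]

theorem map_ldiv (hθ : IsHom L M θ) (x y : Q) : θ (L.ldiv x y) = M.ldiv (θ x) (θ y) := by
  rw [← M.ldiv_mul (θ x) (θ (L.ldiv x y)), ← hθ, L.mul_ldiv]

theorem isotope (hθ : IsHom L M θ) (u v : Q) :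
    IsHom (L.isotope u v) (M.isotope (θ u) (θ v)) θ := fun x y => by
  simp only [LoopStr.isotope, pop, hθ _ _, hθ.map_rdiv, hθ.map_ldiv]

end IsHom

end LoopStr

/-- The second Bryant–Schneider group: the bijections of `Q` that are isomorphisms from
some principal isotope `Q_{a,b}` onto some principal isotope `Q_{c,d}` form a subgroup of
the symmetric group of `Q`. -/
theorem second_bryant_schneider_group {Q : Type*} (L : LoopStr Q) :
    ∃ G : Subgroup (Equiv.Perm Q), ∀ θ : Equiv.Perm Q,
      θ ∈ G ↔ ∃ a b c d : Q, ∀ x y : Q, θ (pop L a b x y) = pop L c d (θ x) (θ y) := by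
  refine ⟨{
    carrier := {θ | ∃ a b c d, LoopStr.IsHom (L.isotope a b) (L.isotope c d) θ}
    one_mem' := ⟨L.one, L.one, L.one, L.one, LoopStr.IsHom.id _⟩
    mul_mem' := ?_
    inv_mem' := fun ⟨a, b, c, d, hθ⟩ => ⟨c, d, a, b, hθ.symm⟩ }, fun θ => Iff.rfl⟩
  rintro θ φ ⟨e, f, g, h, hθ⟩ ⟨a, b, c, d, hφ⟩
  have hθ' := hθ.isotope (L.mul c f) (L.mul e d)
  rw [← L.isotope_eq_isotope_isotope, L.isotope_isotope] at hθ'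
  exact ⟨a, b, _, _, hθ'.comp hφ⟩
end

section
/- Let Q be a loop, and for x,u,v ∈ Q define φ₀(x,u,v) = u\(((u·v)/(u\(x·v)))·v). Then φ₀(x,u,v) = u\(x·v) for all x,u,v if and only if x\(u·v) = u\(x·v) for all x,u,v. -/
/-- `φ₀(x,u,v) = u \ (((u·v)/(u\(x·v)))·v)`. -/
def phi0 {Q : Type*} (L : LoopStr Q) (x u v : Q) : Q :=
  L.ldiv u (L.mul (L.rdiv (L.mul u v) (L.ldiv u (L.mul x v))) v)

namespace LoopStr

variable {Q : Type*} (L : LoopStr Q) {a b c : Q}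

theorem ldiv_eq_iff_mul_eq : L.ldiv a b = c ↔ L.mul a c = b :=
  ⟨fun h => h ▸ L.mul_ldiv a b, fun h => h ▸ L.ldiv_mul a c⟩

theorem rdiv_eq_iff_mul_eq : L.rdiv a b = c ↔ L.mul c b = a :=
  ⟨fun h => h ▸ L.rdiv_mul a b, fun h => h ▸ L.mul_rdiv c b⟩

theorem ldiv_inj : L.ldiv a b = L.ldiv a c ↔ b = c := by
  rw [ldiv_eq_iff_mul_eq, mul_ldiv]
  exact eq_comm

theorem mul_left_inj : L.mul b a = L.mul c a ↔ b = c := by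
  rw [← rdiv_eq_iff_mul_eq, mul_rdiv]
  exact eq_comm

end LoopStr

theorem phi0_eq_iff_ldiv_comm {Q : Type*} (L : LoopStr Q) (x u v : Q) :
    phi0 L x u v = L.ldiv u (L.mul x v) ↔ L.ldiv x (L.mul u v) = L.ldiv u (L.mul x v) := by
  rw [phi0, L.ldiv_inj, L.mul_left_inj, L.rdiv_eq_iff_mul_eq, L.ldiv_eq_iff_mul_eq]

/-- `φ₀(x,u,v) = u\(x·v)` for all `x,u,v` iff `x\(u·v) = u\(x·v)` for all `x,u,v`. -/
theorem phi0_eq_iff {Q : Type*} (L : LoopStr Q) :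
    (∀ x u v, phi0 L x u v = L.ldiv u (L.mul x v)) ↔
    (∀ x u v, L.ldiv x (L.mul u v) = L.ldiv u (L.mul x v)) := by
  simp only [phi0_eq_iff_ldiv_comm]
end

section
/- Let Q be a loop with the property that for all x,u,v ∈ Q, the principal isotopes Q_{u, φ₀(x,u,v)} and Q_{u, u\(x·v)} are equal as magmas (not merely isomorphic), where φ₀(x,u,v) = u\(((u·v)/(u\(x·v)))·v). If Q is also an Osborn loop, then Q is a Boolean group (abelian group of exponent 2). -/
/-!
Evaluating `Q_{f,g}` at `(a, f)` gives `a / g`, so the isotope determines `g`; hence the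
hypothesis says `φ₀(x,u,v) = u \ (x·v)`, which unwinds to the exchange law
`u \ (x·v) = x \ (u·v)`. With `x = 1` this turns `\` into `·`, so `x·x = x \ x = 1`, and the
exchange law becomes `u·(x·v) = x·(u·v)`, giving commutativity (`v = 1`) and then associativity.
-/

namespace LoopStr

variable {Q : Type*} (L : LoopStr Q)

theorem ldiv_eq_iff {a b c : Q} : L.ldiv a b = c ↔ L.mul a c = b :=
  ⟨fun h => h ▸ L.mul_ldiv a b, fun h => h ▸ L.ldiv_mul a c⟩

theorem rdiv_eq_iff {a b c : Q} : L.rdiv a b = c ↔ L.mul c b = a :=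
  ⟨fun h => h ▸ L.rdiv_mul a b, fun h => h ▸ L.mul_rdiv c b⟩

theorem mul_right_cancel {a b c : Q} (h : L.mul a c = L.mul b c) : a = b := by
  rw [← L.mul_rdiv a c, h, L.mul_rdiv]

theorem ldiv_self (a : Q) : L.ldiv a a = L.one :=
  (L.ldiv_eq_iff).2 (L.mul_one a)

theorem rdiv_self (a : Q) : L.rdiv a a = L.one :=
  (L.rdiv_eq_iff).2 (L.one_mul a)

theorem one_ldiv (a : Q) : L.ldiv L.one a = a :=
  (L.ldiv_eq_iff).2 (L.one_mul a)

theorem pop_self_right (f g a : Q) : pop L f g a f = L.rdiv a g := by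
  rw [pop, ldiv_self, mul_one]

theorem eq_of_pop_eq {f g h : Q} (hgh : ∀ a b, pop L f g a b = pop L f h a b) : g = h := by
  have hg : L.rdiv g h = L.one := by
    rw [← pop_self_right, ← hgh, pop_self_right, rdiv_self]
  simpa only [one_mul] using ((L.rdiv_eq_iff).1 hg).symm

theorem ldiv_mul_symm_of_phi0_eq {x u v : Q} (h : phi0 L x u v = L.ldiv u (L.mul x v)) :
    L.ldiv u (L.mul x v) = L.ldiv x (L.mul u v) := by
  set w := L.ldiv u (L.mul x v)
  have huw : L.mul u w = L.mul x v := L.mul_ldiv u _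
  have hx : L.rdiv (L.mul u v) w = x := by
    rw [phi0, ldiv_eq_iff, huw] at h
    exact L.mul_right_cancel h.symm
  exact ((L.ldiv_eq_iff).2 ((L.rdiv_eq_iff).1 hx)).symm

theorem boolean_of_ldiv_mul_symm (h : ∀ x u v, L.ldiv u (L.mul x v) = L.ldiv x (L.mul u v)) :
    (∀ x y, L.mul x y = L.mul y x) ∧
    (∀ x y z, L.mul (L.mul x y) z = L.mul x (L.mul y z)) ∧
    (∀ x, L.mul x x = L.one) := by
  have ldiv_eq_mul : ∀ u v, L.ldiv u v = L.mul u v := fun u v => by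
    simpa only [one_mul, one_ldiv] using h L.one u v
  have exchange : ∀ x u v, L.mul u (L.mul x v) = L.mul x (L.mul u v) := fun x u v => by
    simpa only [ldiv_eq_mul] using h x u v
  have comm : ∀ x y, L.mul x y = L.mul y x := fun x y => by
    simpa only [mul_one] using exchange y x L.one
  refine ⟨comm, fun x y z => ?_, fun x => ?_⟩
  · rw [comm (L.mul x y), exchange, comm z]
  · rw [← ldiv_eq_mul, ldiv_self]

end LoopStr

theorem boolean_group_of_equal_isotopes_general {Q : Type*} (L : LoopStr Q)
    (heq : ∀ x u v a b, pop L u (phi0 L x u v) a b = pop L u (L.ldiv u (L.mul x v)) a b) :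
    (∀ x y, L.mul x y = L.mul y x) ∧
    (∀ x y z, L.mul (L.mul x y) z = L.mul x (L.mul y z)) ∧
    (∀ x, L.mul x x = L.one) :=
  L.boolean_of_ldiv_mul_symm fun x u v =>
    L.ldiv_mul_symm_of_phi0_eq (L.eq_of_pop_eq (heq x u v))

/-- If in an Osborn loop the principal isotopes `Q_{u,φ₀(x,u,v)}` and `Q_{u,u\(x·v)}`
are equal as magmas for all `x,u,v`, then the loop is a Boolean group. -/
theorem boolean_group_of_equal_isotopes {Q : Type*} (L : LoopStr Q)
    (osborn : ∀ x y z, L.mul (L.mul x (L.mul y z)) x =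
      L.mul (L.mul x y) (L.mul (L.mul (L.rdiv L.one x) (L.mul x z)) x))
    (heq : ∀ x u v a b, pop L u (phi0 L x u v) a b = pop L u (L.ldiv u (L.mul x v)) a b) :
    (∀ x y, L.mul x y = L.mul y x) ∧
    (∀ x y z, L.mul (L.mul x y) z = L.mul x (L.mul y z)) ∧
    (∀ x, L.mul x x = L.one) :=
  boolean_group_of_equal_isotopes_general L heq
end
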